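/- arXiv:2408.04254 — 5 statements merged into one kernel-verified Lean document; each statement's English description precedes it below -/
import Mathlib

section
/- Let A be an N×N real matrix (weights may be negative). If Tr[(I + A∘A)^N] = N, where ∘ denotes the Hadamard (entrywise) product, then the directed graph whose edge set is {(i,j) : A(i,j) ≠ 0} contains no directed cycle of any length. -/
open scoped Matrix

/-- The support digraph of `A` has a directed cycle of length `k`. -/
def hasCycleOfLength {N : ℕ} (A : Matrix (Fin N) (Fin N) ℝ) (k : ℕ) : Prop :=
  ∃ p : ℕ → Fin N, p k = p 0 ∧ ∀ m < k, A (p m) (p (m + 1)) ≠ 0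

section Aux

variable {N : ℕ}

lemma aux_one_nonneg : ∀ i j : Fin N, 0 ≤ (1 : Matrix (Fin N) (Fin N) ℝ) i j := by
  intro i j; rw [Matrix.one_apply]; split <;> norm_num

lemma aux_pow_nonneg (M : Matrix (Fin N) (Fin N) ℝ) (hM : ∀ i j, 0 ≤ M i j) :
    ∀ (n : ℕ) (i j : Fin N), 0 ≤ (M ^ n) i j := by
  intro n
  induction n with
  | zero => intro i j; rw [pow_zero]; exact aux_one_nonneg i j
  | succ n ih =>
    intro i j
    rw [pow_succ, Matrix.mul_apply]
    exact Finset.sum_nonneg fun l _ => mul_nonneg (ih i l) (hM l j)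

lemma aux_mul_le_mul (X' X Y' Y : Matrix (Fin N) (Fin N) ℝ)
    (hX' : ∀ i j, 0 ≤ X' i j) (hY' : ∀ i j, 0 ≤ Y' i j)
    (hX : ∀ i j, X' i j ≤ X i j) (hY : ∀ i j, Y' i j ≤ Y i j) :
    ∀ i j, (X' * Y') i j ≤ (X * Y) i j := by
  intro i j
  rw [Matrix.mul_apply, Matrix.mul_apply]
  apply Finset.sum_le_sum
  intro l _
  exact mul_le_mul (hX i l) (hY l j) (hY' l j) ((hX' i l).trans (hX i l))

lemma aux_one_le_pow (B : Matrix (Fin N) (Fin N) ℝ) (hB : ∀ i j, 0 ≤ B i j) :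
    ∀ (n : ℕ) (i j : Fin N), (1 : Matrix (Fin N) (Fin N) ℝ) i j ≤ ((1 + B) ^ n) i j := by
  have h1B : ∀ i j : Fin N, 0 ≤ (1 + B) i j := fun i j => by
    rw [Matrix.add_apply]; exact add_nonneg (aux_one_nonneg i j) (hB i j)
  intro n
  induction n with
  | zero => intro i j; rw [pow_zero]
  | succ n ih =>
    intro i j
    rw [pow_succ]
    have := aux_mul_le_mul 1 ((1 + B) ^ n) 1 (1 + B)
      aux_one_nonneg aux_one_nonneg ih
      (fun a b => by rw [Matrix.add_apply]; nlinarith [hB a b, aux_one_nonneg a b]) i j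
    rw [one_mul] at this
    exact this

lemma aux_one_add_pow (B : Matrix (Fin N) (Fin N) ℝ) (hB : ∀ i j, 0 ≤ B i j)
    {n : ℕ} (hn : 1 ≤ n) :
    ∀ i j : Fin N, (1 + B ^ n) i j ≤ ((1 + B) ^ n) i j := by
  have hBn := aux_pow_nonneg B hB
  induction n, hn using Nat.le_induction with
  | base => intro i j; simp
  | succ n hn ih =>
    intro i j
    have h1Bn : ∀ i j : Fin N, 0 ≤ (1 + B ^ n) i j := fun i j => by
      rw [Matrix.add_apply]; exact add_nonneg (aux_one_nonneg i j) (hBn n i j)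
    have h1B : ∀ i j : Fin N, 0 ≤ (1 + B) i j := fun i j => by
      rw [Matrix.add_apply]; exact add_nonneg (aux_one_nonneg i j) (hB i j)
    have step := aux_mul_le_mul (1 + B ^ n) ((1 + B) ^ n) (1 + B) (1 + B)
      h1Bn h1B ih (fun i j => le_refl _) i j
    rw [← pow_succ] at step
    refine le_trans ?_ step
    have expand : (1 + B ^ n) * (1 + B) = 1 + B + B ^ n + B ^ n * B := by
      noncomm_ring
    rw [expand]
    have hL : (1 + B ^ (n + 1)) i j = (1 : Matrix (Fin N) (Fin N) ℝ) i j + (B ^ n * B) i j := by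
      rw [pow_succ]; simp [Matrix.add_apply]
    rw [hL]
    simp only [Matrix.add_apply]
    linarith [hB i j, hBn n i j]

lemma aux_walk_pos (B : Matrix (Fin N) (Fin N) ℝ) (hB : ∀ i j, 0 ≤ B i j) :
    ∀ (j : ℕ) (q : ℕ → Fin N), (∀ m < j, 0 < B (q m) (q (m + 1))) →
      0 < (B ^ j) (q 0) (q j) := by
  intro j
  induction j with
  | zero =>
    intro q _
    simp [Matrix.one_apply]
  | succ j ih =>
    intro q hq
    rw [pow_succ, Matrix.mul_apply]
    apply Finset.sum_pos'
    · intro l _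
      exact mul_nonneg (aux_pow_nonneg B hB j (q 0) l) (hB l (q (j + 1)))
    · refine ⟨q j, Finset.mem_univ _, ?_⟩
      exact mul_pos (ih q fun m hm => hq m (hm.trans (Nat.lt_succ_self j)))
        (hq j (Nat.lt_succ_self j))

end Aux

theorem stmt_0 {N : ℕ} (A : Matrix (Fin N) (Fin N) ℝ)
    (h : Matrix.trace ((1 + A ⊙ A) ^ N) = (N : ℝ)) :
    ¬ ∃ k, 1 ≤ k ∧ hasCycleOfLength A k := by
  rintro ⟨k, hk1, p, hpk, hpe⟩
  rcases Nat.eq_zero_or_pos N with hN | hN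
  · subst hN; exact (p 0).elim0
  set B := A ⊙ A with hBdef
  have hBnn : ∀ i j, 0 ≤ B i j := by
    intro i j
    simp only [hBdef, Matrix.hadamard_apply]
    exact mul_self_nonneg _
  -- extract a cycle of length j with 1 ≤ j ≤ N
  obtain ⟨j, hj1, hjN, q, hq0, hqe⟩ :
      ∃ j, 1 ≤ j ∧ j ≤ N ∧ ∃ q : ℕ → Fin N, q j = q 0 ∧
        ∀ m < j, A (q m) (q (m + 1)) ≠ 0 := by
    rcases le_or_gt k N with hkN | hkN
    · exact ⟨k, hk1, hkN, p, hpk, hpe⟩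
    · have hcard : Fintype.card (Fin N) < Fintype.card (Fin (N + 1)) := by simp
      obtain ⟨a, b, hab, heq⟩ :=
        Fintype.exists_ne_map_eq_of_card_lt (fun m : Fin (N + 1) => p m) hcard
      obtain ⟨a', b', hab', hbN, heq'⟩ :
          ∃ a' b' : ℕ, a' < b' ∧ b' ≤ N ∧ p a' = p b' := by
        rcases (Fin.val_ne_of_ne hab).lt_or_gt with hlt | hlt
        · exact ⟨a.val, b.val, hlt, Nat.lt_succ_iff.mp b.isLt, heq⟩
        · exact ⟨b.val, a.val, hlt, Nat.lt_succ_iff.mp a.isLt, heq.symm⟩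
      refine ⟨b' - a', by omega, by omega, fun m => p (a' + m), ?_, ?_⟩
      · have hba : a' + (b' - a') = b' := by omega
        simp only [hba, Nat.add_zero]
        exact heq'.symm
      · intro m hm
        have hlt2 : a' + m < k := by omega
        have := hpe (a' + m) hlt2
        simpa [Nat.add_assoc] using this
  -- each diagonal entry of (1+B)^N is at least 1
  have hdiag_ge1 : ∀ i : Fin N, (1 : ℝ) ≤ ((1 + B) ^ N) i i := fun i => by
    have := aux_one_le_pow B hBnn N i i
    simpa [Matrix.one_apply] using this
  -- trace equals N forces each diagonal entry to be exactly 1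
  have htr : ∑ i : Fin N, ((1 + B) ^ N) i i = (N : ℝ) := by
    rw [← h]; rfl
  have hdiag_eq : ∀ i : Fin N, ((1 + B) ^ N) i i = 1 := by
    by_contra hcon
    push_neg at hcon
    obtain ⟨i0, hi0⟩ := hcon
    have hi0' : 1 < ((1 + B) ^ N) i0 i0 := lt_of_le_of_ne (hdiag_ge1 i0) (Ne.symm hi0)
    have hlt : (N : ℝ) < ∑ i : Fin N, ((1 + B) ^ N) i i := by
      calc (N : ℝ) = ∑ _i : Fin N, (1 : ℝ) := by simp
        _ < ∑ i : Fin N, ((1 + B) ^ N) i i := by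
            apply Finset.sum_lt_sum
            · intro i _; exact hdiag_ge1 i
            · exact ⟨i0, Finset.mem_univ _, hi0'⟩
    rw [htr] at hlt
    exact lt_irrefl _ hlt
  -- the cycle gives a positive diagonal entry of B^j
  have hpos : 0 < (B ^ j) (q 0) (q 0) := by
    have := aux_walk_pos B hBnn j q (fun m hm => by
      have hne := hqe m hm
      simp only [hBdef, Matrix.hadamard_apply]
      exact mul_self_pos.mpr hne)
    rwa [hq0] at this
  -- hence the diagonal entry of (1+B)^N at q 0 exceeds 1 : contradiction
  have key : (1 : ℝ) + (B ^ j) (q 0) (q 0) ≤ ((1 + B) ^ N) (q 0) (q 0) := by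
    have hsplit : (1 + B) ^ N = (1 + B) ^ j * (1 + B) ^ (N - j) := by
      rw [← pow_add]; congr 1; omega
    have h1Bj : ∀ a b : Fin N, 0 ≤ (1 + B ^ j) a b := fun a b => by
      rw [Matrix.add_apply]
      exact add_nonneg (aux_one_nonneg a b) (aux_pow_nonneg B hBnn j a b)
    have hmono := aux_mul_le_mul (1 + B ^ j) ((1 + B) ^ j)
      (1 : Matrix (Fin N) (Fin N) ℝ) ((1 + B) ^ (N - j))
      h1Bj aux_one_nonneg (aux_one_add_pow B hBnn hj1)
      (aux_one_le_pow B hBnn (N - j)) (q 0) (q 0)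
    rw [hsplit]
    refine le_trans ?_ hmono
    simp [Matrix.add_apply, Matrix.one_apply]
  rw [hdiag_eq (q 0)] at key
  linarith
end

section
/- For an N×N real matrix A, the function α(A) = Tr[(I + A∘A)^N] − N is nonnegative, and α(A) = 0 if and only if the directed graph with edges {(i,j): A(i,j) ≠ 0} is acyclic. -/
open scoped Matrix

section aux
variable {N : ℕ}

lemma aux_entry_nonneg (A : Matrix (Fin N) (Fin N) ℝ) (k : ℕ) (i j : Fin N) :
    0 ≤ ((A ⊙ A) ^ k) i j := by
  induction k generalizing i j with
  | zero => simp [Matrix.one_apply]; split <;> norm_num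
  | succ k ih =>
    rw [pow_succ, Matrix.mul_apply]
    refine Finset.sum_nonneg fun l _ => mul_nonneg (ih i l) ?_
    simp only [Matrix.hadamard_apply]
    exact mul_self_nonneg _

lemma aux_trace_nonneg (A : Matrix (Fin N) (Fin N) ℝ) (k : ℕ) :
    0 ≤ ((A ⊙ A) ^ k).trace :=
  Finset.sum_nonneg fun i _ => aux_entry_nonneg A k i i

lemma aux_entry_pos_of_path (A : Matrix (Fin N) (Fin N) ℝ) (k : ℕ) (p : ℕ → Fin N)
    (h : ∀ m < k, A (p m) (p (m + 1)) ≠ 0) :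
    0 < ((A ⊙ A) ^ k) (p 0) (p k) := by
  induction k with
  | zero => simp [Matrix.one_apply]
  | succ k ih =>
    rw [pow_succ, Matrix.mul_apply]
    have h1 : 0 < ((A ⊙ A) ^ k) (p 0) (p k) := ih fun m hm => h m (by omega)
    have h2 : 0 < (A ⊙ A) (p k) (p (k + 1)) := by
      simp only [Matrix.hadamard_apply]
      exact mul_self_pos.mpr (h k (by omega))
    calc (0:ℝ) < ((A ⊙ A) ^ k) (p 0) (p k) * (A ⊙ A) (p k) (p (k+1)) := mul_pos h1 h2
    _ ≤ _ := Finset.single_le_sum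
        (f := fun l => ((A ⊙ A) ^ k) (p 0) l * (A ⊙ A) l (p (k+1)))
        (fun l _ => mul_nonneg (aux_entry_nonneg A k _ _)
          (by simp only [Matrix.hadamard_apply]; exact mul_self_nonneg _))
        (Finset.mem_univ (p k))

lemma aux_path_of_entry_pos (A : Matrix (Fin N) (Fin N) ℝ) :
    ∀ (k : ℕ) (i j : Fin N), 0 < ((A ⊙ A) ^ k) i j →
    ∃ p : ℕ → Fin N, p 0 = i ∧ p k = j ∧ ∀ m < k, A (p m) (p (m + 1)) ≠ 0 := by
  intro k
  induction k with
  | zero =>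
    intro i j h
    simp only [pow_zero, Matrix.one_apply] at h
    split at h
    · exact ⟨fun _ => i, rfl, by simp [*], by omega⟩
    · norm_num at h
  | succ k ih =>
    intro i j h
    rw [pow_succ, Matrix.mul_apply] at h
    have : ∃ l, 0 < ((A ⊙ A) ^ k) i l * (A ⊙ A) l j := by
      by_contra hc
      push_neg at hc
      have : ∑ l, ((A ⊙ A) ^ k) i l * (A ⊙ A) l j ≤ 0 :=
        Finset.sum_nonpos fun l _ => hc l
      linarith
    obtain ⟨l, hl⟩ := this
    have h2nn : 0 ≤ (A ⊙ A) l j := by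
      simp only [Matrix.hadamard_apply]; exact mul_self_nonneg _
    have h1 : 0 < ((A ⊙ A) ^ k) i l := by
      rcases lt_or_eq_of_le (aux_entry_nonneg A k i l) with h' | h'
      · exact h'
      · rw [← h'] at hl; simp at hl
    have h2 : 0 < (A ⊙ A) l j := by
      rcases lt_or_eq_of_le h2nn with h' | h'
      · exact h'
      · rw [← h'] at hl; simp at hl
    obtain ⟨p, hp0, hpk, hp⟩ := ih i l h1
    refine ⟨fun n => if n ≤ k then p n else j, by simpa using hp0, by simp, ?_⟩
    intro m hm
    by_cases hmk : m + 1 ≤ k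
    · simp only [if_pos (by omega : m ≤ k), if_pos hmk]
      exact hp m (by omega)
    · simp only [if_pos (by omega : m ≤ k), if_neg hmk]
      rw [show m = k from by omega, hpk]
      intro hcon
      rw [Matrix.hadamard_apply, hcon, mul_zero] at h2
      exact lt_irrefl _ h2

lemma aux_cycle_iff_trace_pos (A : Matrix (Fin N) (Fin N) ℝ) (k : ℕ) :
    hasCycleOfLength A k ↔ 0 < ((A ⊙ A) ^ k).trace := by
  constructor
  · rintro ⟨p, hpk, hp⟩
    have := aux_entry_pos_of_path A k p hp
    rw [hpk] at this
    calc (0:ℝ) < ((A ⊙ A) ^ k) (p 0) (p 0) := this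
    _ ≤ _ := Finset.single_le_sum (f := fun i => ((A ⊙ A) ^ k) i i)
        (fun i _ => aux_entry_nonneg A k i i) (Finset.mem_univ (p 0))
  · intro h
    have : ∃ i, 0 < ((A ⊙ A) ^ k) i i := by
      by_contra hc
      push_neg at hc
      have : ((A ⊙ A) ^ k).trace ≤ 0 := Finset.sum_nonpos fun i _ => hc i
      linarith
    obtain ⟨i, hi⟩ := this
    obtain ⟨p, hp0, hpk, hp⟩ := aux_path_of_entry_pos A k i i hi
    exact ⟨p, by rw [hpk, hp0], hp⟩

lemma aux_cycle_small (A : Matrix (Fin N) (Fin N) ℝ) (k : ℕ) (hk : 1 ≤ k)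
    (h : hasCycleOfLength A k) : ∃ k', 1 ≤ k' ∧ k' ≤ N ∧ hasCycleOfLength A k' := by
  obtain ⟨p, hpk, hp⟩ := h
  by_cases hkN : k ≤ N
  · exact ⟨k, hk, hkN, p, hpk, hp⟩
  · push_neg at hkN
    have hcard : Fintype.card (Fin N) < Fintype.card (Fin (N + 1)) := by simp
    obtain ⟨a, b, hab, hpab⟩ :=
      Fintype.exists_ne_map_eq_of_card_lt (fun n : Fin (N + 1) => p n) hcard
    have haN := a.isLt
    have hbN := b.isLt
    rcases lt_or_gt_of_ne hab with hlt | hgt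
    · have hv : a.val < b.val := hlt
      refine ⟨b.val - a.val, by omega, by omega, fun n => p (a.val + n), ?_, ?_⟩
      · show p (a.val + (b.val - a.val)) = p (a.val + 0)
        rw [show a.val + (b.val - a.val) = b.val from by omega]
        exact hpab.symm
      · intro m hm
        have := hp (a.val + m) (by omega)
        show A (p (a.val + m)) (p (a.val + (m + 1))) ≠ 0
        rw [← Nat.add_assoc]
        exact this
    · have hv : b.val < a.val := hgt
      refine ⟨a.val - b.val, by omega, by omega, fun n => p (b.val + n), ?_, ?_⟩
      · show p (b.val + (a.val - b.val)) = p (b.val + 0)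
        rw [show b.val + (a.val - b.val) = a.val from by omega]
        exact hpab
      · intro m hm
        have := hp (b.val + m) (by omega)
        show A (p (b.val + m)) (p (b.val + (m + 1))) ≠ 0
        rw [← Nat.add_assoc]
        exact this

end aux

theorem stmt_6 {N : ℕ} (A : Matrix (Fin N) (Fin N) ℝ) :
    0 ≤ Matrix.trace ((1 + A ⊙ A) ^ N) - (N : ℝ) ∧
    (Matrix.trace ((1 + A ⊙ A) ^ N) - (N : ℝ) = 0 ↔
      ¬ ∃ k, 1 ≤ k ∧ hasCycleOfLength A k) := by
  set B := A ⊙ A with hB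
  have expand : (1 + B) ^ N = ∑ k ∈ Finset.range (N + 1), (N.choose k) • B ^ k := by
    rw [add_comm, (Commute.one_right B).add_pow]
    refine Finset.sum_congr rfl fun k _ => ?_
    rw [one_pow, mul_one, nsmul_eq_mul, (Nat.cast_commute (N.choose k) (B ^ k)).eq]
  have htr : Matrix.trace ((1 + B) ^ N) - (N : ℝ) =
      ∑ i ∈ Finset.range N, (N.choose (i + 1) : ℝ) * (B ^ (i + 1)).trace := by
    rw [expand, Matrix.trace_sum]
    simp only [Matrix.trace_smul]
    rw [Finset.sum_range_succ']
    simp [Matrix.trace_one, nsmul_eq_mul]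
  have hterm : ∀ i ∈ Finset.range N, 0 ≤ (N.choose (i + 1) : ℝ) * (B ^ (i + 1)).trace :=
    fun i _ => mul_nonneg (Nat.cast_nonneg _) (aux_trace_nonneg A (i + 1))
  rw [htr]
  constructor
  · exact Finset.sum_nonneg hterm
  · rw [Finset.sum_eq_zero_iff_of_nonneg hterm]
    constructor
    · rintro hz ⟨k, hk1, hk⟩
      obtain ⟨k', hk'1, hk'N, hcyc⟩ := aux_cycle_small A k hk1 hk
      have hpos := (aux_cycle_iff_trace_pos A k').mp hcyc
      have := hz (k' - 1) (Finset.mem_range.mpr (by omega))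
      rw [show k' - 1 + 1 = k' from by omega] at this
      have hcpos : (0:ℝ) < (N.choose k' : ℝ) := by
        exact_mod_cast Nat.choose_pos hk'N
      nlinarith
    · intro hnc i _
      have : ¬ hasCycleOfLength A (i + 1) := fun hc => hnc ⟨i + 1, by omega, hc⟩
      rw [aux_cycle_iff_trace_pos] at this
      push_neg at this
      have hz0 : (B ^ (i + 1)).trace = 0 := le_antisymm this (aux_trace_nonneg A (i + 1))
      rw [hz0, mul_zero]
end

section
/- Let A be an N×N real matrix with zero diagonal such that Tr[(A∘A)^k] = 0 for every 2 ≤ k ≤ N. Then A is nilpotent, and in particular det(I − Aᵀ) = 1. -/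
open scoped Matrix

private lemma pow_entry_nonneg {n : Type*} [Fintype n] [DecidableEq n]
    (B : Matrix n n ℝ) (hB : ∀ i j, 0 ≤ B i j) :
    ∀ k i j, 0 ≤ (B ^ k) i j := by
  intro k
  induction k with
  | zero =>
    intro i j
    rw [pow_zero]
    by_cases h : i = j <;> simp [Matrix.one_apply, h]
  | succ k ih =>
    intro i j
    rw [pow_succ, Matrix.mul_apply]
    exact Finset.sum_nonneg fun c _ => mul_nonneg (ih i c) (hB c j)

private lemma pow_chain_pos {n : Type*} [Fintype n] [DecidableEq n]
    (B : Matrix n n ℝ) (hB : ∀ i j, 0 ≤ B i j) (g : n → n)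
    (hg : ∀ i, 0 < B i (g i)) :
    ∀ m u, 0 < (B ^ m) u (g^[m] u) := by
  intro m
  induction m with
  | zero => intro u; simp [Matrix.one_apply]
  | succ m ih =>
    intro u
    rw [pow_succ', Matrix.mul_apply, Function.iterate_succ_apply]
    have hterm : 0 < B u (g u) * (B ^ m) (g u) (g^[m] (g u)) :=
      mul_pos (hg u) (ih (g u))
    have hle : B u (g u) * (B ^ m) (g u) (g^[m] (g u)) ≤
        ∑ c, B u c * (B ^ m) c (g^[m] (g u)) := by
      apply Finset.single_le_sum (f := fun c => B u c * (B ^ m) c (g^[m] (g u)))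
        (fun c _ => mul_nonneg (hB u c) (pow_entry_nonneg B hB m c _)) (Finset.mem_univ _)
    linarith

private lemma key_nilpotent :
    ∀ (m : ℕ) (n : Type) (_ : Fintype n) (_ : DecidableEq n)
      (B : Matrix n n ℝ), Fintype.card n = m →
      (∀ i j, 0 ≤ B i j) →
      (∀ k, 1 ≤ k → k ≤ m → ∀ i, (B ^ k) i i = 0) →
      B ^ m = 0 := by
  intro m
  induction m using Nat.strong_induction_on with
  | _ m IH =>
  intro n instF instD B hcard hB hd
  rcases Nat.eq_zero_or_pos m with hm0 | hmpos
  · subst hm0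
    have : IsEmpty n := Fintype.card_eq_zero_iff.mp hcard
    ext i j
    exact (this.false i).elim
  -- find a sink
  have hsink : ∃ i : n, ∀ j, B i j = 0 := by
    by_contra hcon
    push_neg at hcon
    choose g hg using hcon
    have hgpos : ∀ i, 0 < B i (g i) := fun i => lt_of_le_of_ne (hB i (g i)) (Ne.symm (hg i))
    have hne : Nonempty n := Fintype.card_pos_iff.mp (hcard ▸ hmpos)
    obtain ⟨x₀⟩ := hne
    have hlt : Fintype.card n < Fintype.card (Fin (m + 1)) := by
      rw [hcard, Fintype.card_fin]; omega
    obtain ⟨a, b, hab, heq⟩ :=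
      Fintype.exists_ne_map_eq_of_card_lt (fun t : Fin (m + 1) => g^[(t : ℕ)] x₀) hlt
    wlog hlt' : (a : ℕ) < (b : ℕ) generalizing a b
    · exact this b a hab.symm heq.symm (by omega)
    set d := (b : ℕ) - (a : ℕ) with hd'
    set v := g^[(a : ℕ)] x₀ with hv
    have hiter : g^[d] v = v := by
      have h1 : g^[d] v = g^[d + (a : ℕ)] x₀ := by
        rw [hv, Function.iterate_add_apply]
      have h2 : d + (a : ℕ) = (b : ℕ) := by omega
      rw [h1, h2, ← heq]
    have hpos : 0 < (B ^ d) v v := by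
      have := pow_chain_pos B hB g hgpos d v
      rwa [hiter] at this
    have hzero : (B ^ d) v v = 0 := hd d (by omega) (by omega) v
    linarith
  obtain ⟨i, hrow⟩ := hsink
  -- row i of any positive power is zero
  have hrowk : ∀ k, 1 ≤ k → ∀ l, (B ^ k) i l = 0 := by
    intro k hk l
    obtain ⟨k', rfl⟩ := Nat.exists_eq_add_of_le hk
    rw [add_comm, pow_succ', Matrix.mul_apply]
    exact Finset.sum_eq_zero fun c _ => by rw [hrow c, zero_mul]
  -- the submatrix on the complement of i
  set s := {j : n // j ≠ i} with hs
  set B' : Matrix s s ℝ := Matrix.of (fun a b : s => B a.1 b.1) with hB'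
  have hB'app : ∀ a b : s, B' a b = B a.1 b.1 := fun a b => rfl
  have hB'nonneg : ∀ a b : s, 0 ≤ B' a b := fun a b => hB a.1 b.1
  have hcards : Fintype.card s = m - 1 := by
    have : Fintype.card s = Fintype.card n - 1 := by
      simp [hs, Fintype.card_subtype_compl]
    rw [this, hcard]
  -- subtype sums vs full sums
  have hsum : ∀ f : n → ℝ, (∑ c : s, f c.1) + f i = ∑ c : n, f c := by
    intro f
    rw [← Finset.sum_subtype (Finset.univ \ {i}) (p := fun j => j ≠ i)
      (by intro x; simp) f]
    rw [Finset.sum_sdiff_eq_sub (by simp), Finset.sum_singleton]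
    ring
  -- powers of B' are bounded by powers of B
  have hle : ∀ k (a b : s), (B' ^ k) a b ≤ (B ^ k) a.1 b.1 := by
    intro k
    induction k with
    | zero =>
      intro a b
      by_cases h : a = b
      · subst h; simp [Matrix.one_apply]
      · have h' : a.1 ≠ b.1 := fun hc => h (Subtype.ext hc)
        simp [Matrix.one_apply, h, h']
    | succ k ih =>
      intro a b
      rw [pow_succ, pow_succ, Matrix.mul_apply, Matrix.mul_apply]
      have step1 : ∑ c : s, (B' ^ k) a c * B' c b ≤ ∑ c : s, (B ^ k) a.1 c.1 * B c.1 b.1 :=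
        Finset.sum_le_sum fun c _ => mul_le_mul_of_nonneg_right (ih a c) (hB c.1 b.1)
      have step2 : (∑ c : s, (B ^ k) a.1 c.1 * B c.1 b.1) ≤
          ∑ c : n, (B ^ k) a.1 c * B c b.1 := by
        rw [← hsum (fun c => (B ^ k) a.1 c * B c b.1)]
        have : 0 ≤ (B ^ k) a.1 i * B i b.1 :=
          mul_nonneg (pow_entry_nonneg B hB k a.1 i) (hB i b.1)
        linarith
      exact le_trans step1 step2
  -- diagonal of powers of B' vanish
  have hd' : ∀ k, 1 ≤ k → k ≤ m - 1 → ∀ a : s, (B' ^ k) a a = 0 := by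
    intro k hk1 hk2 a
    have h1 : (B' ^ k) a a ≤ (B ^ k) a.1 a.1 := hle k a a
    have h2 : (B ^ k) a.1 a.1 = 0 := hd k hk1 (by omega) a.1
    have h3 : 0 ≤ (B' ^ k) a a := pow_entry_nonneg B' hB'nonneg k a a
    linarith
  have hIH : B' ^ (m - 1) = 0 := IH (m - 1) (by omega) s _ _ B' hcards hB'nonneg hd'
  -- powers agree on the subtype
  have heqpow : ∀ k, 1 ≤ k → ∀ a b : s, (B ^ k) a.1 b.1 = (B' ^ k) a b := by
    intro k hk
    induction k with
    | zero => omega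
    | succ k ih =>
      intro a b
      rcases Nat.eq_zero_or_pos k with hk0 | hkpos
      · subst hk0; simp [pow_one, hB'app]
      rw [pow_succ, pow_succ, Matrix.mul_apply, Matrix.mul_apply]
      rw [← hsum (fun c => (B ^ k) a.1 c * B c b.1)]
      rw [hrow b.1, mul_zero, add_zero]
      exact Finset.sum_congr rfl fun c _ => by
        rw [ih (by omega) a c, hB'app]
  -- conclude B ^ m = 0
  ext j l
  simp only [Matrix.zero_apply]
  by_cases hji : j = i
  · subst hji; exact hrowk m hmpos l
  rcases Nat.lt_or_ge m 2 with hm1 | hm2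
  · -- m = 1
    have hm : m = 1 := by omega
    subst hm
    have : Fintype.card n ≤ 1 := le_of_eq hcard
    have hjl : j = l := Subsingleton.elim (α := n)
      (h := Fintype.card_le_one_iff_subsingleton.mp this) j l
    subst hjl
    exact hd 1 le_rfl le_rfl j
  · have hm' : m = (m - 1) + 1 := by omega
    rw [hm', pow_succ, Matrix.mul_apply]
    apply Finset.sum_eq_zero
    intro c _
    by_cases hci : c = i
    · subst hci; rw [hrow l, mul_zero]
    · have : (B ^ (m - 1)) j c = (B' ^ (m - 1)) ⟨j, hji⟩ ⟨c, hci⟩ :=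
        heqpow (m - 1) (by omega) ⟨j, hji⟩ ⟨c, hci⟩
      rw [this, hIH, Matrix.zero_apply, zero_mul]

theorem stmt_7 {N : ℕ} (A : Matrix (Fin N) (Fin N) ℝ)
    (hdiag : ∀ i, A i i = 0)
    (h : ∀ k, 2 ≤ k → k ≤ N → Matrix.trace ((A ⊙ A) ^ k) = 0) :
    IsNilpotent A ∧ (1 - Aᵀ).det = 1 := by
  set B : Matrix (Fin N) (Fin N) ℝ := A ⊙ A with hBdef
  have hBapp : ∀ i j, B i j = A i j * A i j := fun i j => rfl
  have hBnonneg : ∀ i j, 0 ≤ B i j := fun i j => by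
    rw [hBapp]; exact mul_self_nonneg _
  have hd : ∀ k, 1 ≤ k → k ≤ N → ∀ i, (B ^ k) i i = 0 := by
    intro k hk1 hk2 i
    rcases Nat.lt_or_ge k 2 with hklt | hkge
    · have : k = 1 := by omega
      subst this
      rw [pow_one, hBapp, hdiag, mul_zero]
    · have htr := h k hkge hk2
      rw [Matrix.trace] at htr
      have := (Finset.sum_eq_zero_iff_of_nonneg
        (fun c _ => pow_entry_nonneg B hBnonneg k c c)).mp htr
      exact this i (Finset.mem_univ i)
  have hBN : B ^ N = 0 :=
    key_nilpotent N (Fin N) _ _ B (Fintype.card_fin N) hBnonneg hd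
  -- Cauchy–Schwarz entrywise bound
  have hcs : ∀ m i j, ((A ^ m) i j) ^ 2 ≤ (N : ℝ) ^ m * (B ^ m) i j := by
    intro m
    induction m with
    | zero =>
      intro i j
      by_cases hij : i = j <;> simp [Matrix.one_apply, hij]
    | succ m ih =>
      intro i j
      rw [pow_succ A, Matrix.mul_apply]
      calc (∑ c, (A ^ m) i c * A c j) ^ 2
          ≤ (Finset.univ.card : ℝ) * ∑ c, ((A ^ m) i c * A c j) ^ 2 :=
            sq_sum_le_card_mul_sum_sq
        _ ≤ (N : ℝ) * ∑ c, ((N : ℝ) ^ m * (B ^ m) i c) * B c j := by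
            apply mul_le_mul
            · simp
            · apply Finset.sum_le_sum
              intro c _
              rw [mul_pow, show A c j ^ 2 = B c j from by rw [hBapp c j]; ring]
              exact mul_le_mul_of_nonneg_right (ih i c) (hBnonneg c j)
            · exact Finset.sum_nonneg fun c _ => sq_nonneg _
            · positivity
        _ = (N : ℝ) ^ (m + 1) * (B ^ (m + 1)) i j := by
            rw [pow_succ B, Matrix.mul_apply, pow_succ, Finset.mul_sum, Finset.mul_sum]
            congr 1
            ext c
            ring
  have hAN : A ^ N = 0 := by
    ext i j
    have h1 := hcs N i j
    rw [hBN, Matrix.zero_apply, mul_zero] at h1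
    have h2 : (0 : ℝ) ≤ ((A ^ N) i j) ^ 2 := sq_nonneg _
    have : ((A ^ N) i j) ^ 2 = 0 := le_antisymm h1 h2
    simpa using pow_eq_zero_iff (n := 2) (by norm_num) |>.mp this
  refine ⟨⟨N, hAN⟩, ?_⟩
  -- determinant part
  have hnilT : IsNilpotent Aᵀ := ⟨N, by rw [← Matrix.transpose_pow, hAN, Matrix.transpose_zero]⟩
  have hu : IsUnit (Matrix.charpolyRev Aᵀ) := Matrix.isUnit_charpolyRev_of_isNilpotent hnilT
  obtain ⟨r, hr, hCr⟩ := Polynomial.isUnit_iff.mp hu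
  have hev : Polynomial.eval 0 (Matrix.charpolyRev Aᵀ) = 1 := Matrix.eval_charpolyRev
  rw [← hCr, Polynomial.eval_C] at hev
  have hcp : Matrix.charpolyRev Aᵀ = 1 := by rw [← hCr, hev, Polynomial.C_1]
  have hmap : (1 - (Polynomial.X : Polynomial ℝ) • Aᵀ.map Polynomial.C).map (Polynomial.eval 1)
      = 1 - Aᵀ := by
    ext i j
    by_cases hij : i = j <;>
      simp [Matrix.one_apply, hij, Matrix.map_apply]
  have := congrArg (Polynomial.eval 1) hcp
  rw [Matrix.charpolyRev, ← Polynomial.coe_evalRingHom, RingHom.map_det] at this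
  rw [RingHom.mapMatrix_apply, Polynomial.coe_evalRingHom, hmap] at this
  simpa using this
end

section
/- For N×N real matrices A, the set {A : Tr[(I + A∘A)^N] = N} is closed in ℝ^{N×N}, and it is exactly the set of matrices whose support digraph is acyclic. -/
/-!
`B := A ∘ A` is entrywise nonnegative with the same support as `A`, so `(B ^ k) i i > 0` exactly
when the support digraph has a closed walk of length `k` through `i`, and otherwise it is `0`.
By the binomial theorem `Tr (I + B) ^ N = N + ∑_{k = 1}^N (N choose k) Tr (B ^ k)`, a sum of
nonnegative terms, so the trace equals `N` iff there is no closed walk of length `1, …, N`; by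
pigeonhole a closed walk of any positive length contains one of length at most `N`. The trace is a
polynomial in the entries of `A`, hence the set is closed.
-/

open scoped Matrix

open Finset

@[fun_prop]
theorem Continuous.matrix_hadamard {X R m n : Type*} [TopologicalSpace X] [TopologicalSpace R]
    [Mul R] [ContinuousMul R] {f g : X → Matrix m n R} (hf : Continuous f) (hg : Continuous g) :
    Continuous fun x => f x ⊙ g x :=
  continuous_matrix fun i j => (hf.matrix_elem i j).mul (hg.matrix_elem i j)

theorem exists_closed_subwalk_of_card_le {α : Type*} [Fintype α] {r : α → α → Prop} {k : ℕ}
    (hk : Fintype.card α ≤ k) {p : ℕ → α} (hp : ∀ m < k, r (p m) (p (m + 1))) :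
    ∃ b, 1 ≤ b ∧ b ≤ Fintype.card α ∧
      ∃ q : ℕ → α, q b = q 0 ∧ ∀ m < b, r (q m) (q (m + 1)) := by
  obtain ⟨x, y, hxy, hpxy⟩ := Fintype.exists_ne_map_eq_of_card_lt
    (fun x : Fin (Fintype.card α + 1) => p x) (by simp)
  obtain ⟨i, j, hij, hpij⟩ : ∃ i j : Fin (Fintype.card α + 1), i < j ∧ p i = p j := by
    rcases hxy.lt_or_gt with h | h
    · exact ⟨x, y, h, hpxy⟩
    · exact ⟨y, x, h, hpxy.symm⟩
  have hj := j.isLt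
  refine ⟨j - i, by omega, by omega, fun m => p (i + m), ?_, fun m hm => ?_⟩
  · simp only [add_zero, hpij, Nat.add_sub_cancel' hij.le]
  · simpa only [add_assoc] using hp (i + m) (by omega)

namespace Matrix

theorem hadamard_self_nonneg {m n R : Type*} [Ring R] [LinearOrder R] [IsOrderedRing R]
    (A : Matrix m n R) (i : m) (j : n) : 0 ≤ (A ⊙ A) i j :=
  mul_self_nonneg (A i j)

variable {n R : Type*} [Fintype n] [DecidableEq n] [Ring R] [LinearOrder R] [IsStrictOrderedRing R]
  {B : Matrix n n R}

theorem pow_apply_ne_zero_iff_exists_walk (hB : ∀ i j, 0 ≤ B i j) (k : ℕ) (i j : n) :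
    (B ^ k) i j ≠ 0 ↔ ∃ p : ℕ → n, p 0 = i ∧ p k = j ∧ ∀ m < k, B (p m) (p (m + 1)) ≠ 0 := by
  induction k generalizing j with
  | zero =>
    simp only [pow_zero, one_apply, ne_eq, ite_eq_right_iff, one_ne_zero, imp_false, not_not,
      not_lt_zero, false_imp_iff, implies_true, and_true]
    exact ⟨fun hij => ⟨fun _ => i, rfl, hij⟩, fun ⟨p, hp0, hpj⟩ => hp0 ▸ hpj⟩
  | succ k ih =>
    have hterm (l : n) (_ : l ∈ univ) : 0 ≤ (B ^ k) i l * B l j :=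
      mul_nonneg (pow_apply_nonneg hB k i l) (hB l j)
    rw [pow_succ, mul_apply, Ne, sum_eq_zero_iff_of_nonneg hterm]
    push Not
    simp only [mem_univ, true_and, mul_ne_zero_iff, ih]
    constructor
    · rintro ⟨l, ⟨p, hp0, hpk, hp⟩, hl⟩
      refine ⟨fun m => if m ≤ k then p m else j, by simpa using hp0, by simp, fun m hm => ?_⟩
      rcases Nat.lt_succ_iff_lt_or_eq.mp hm with hm | rfl
      · simpa [hm.le, Nat.succ_le_of_lt hm] using hp m hm
      · simpa [hpk] using hl
    · rintro ⟨p, hp0, rfl, hp⟩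
      exact ⟨p k, ⟨p, hp0, rfl, fun m hm => hp m (hm.trans k.lt_succ_self)⟩, hp k k.lt_succ_self⟩

theorem trace_pow_nonneg (hB : ∀ i j, 0 ≤ B i j) (k : ℕ) : 0 ≤ trace (B ^ k) :=
  sum_nonneg fun i _ => pow_apply_nonneg hB k i i

theorem trace_pow_ne_zero_iff_exists_closed_walk (hB : ∀ i j, 0 ≤ B i j) (k : ℕ) :
    trace (B ^ k) ≠ 0 ↔ ∃ p : ℕ → n, p k = p 0 ∧ ∀ m < k, B (p m) (p (m + 1)) ≠ 0 := by
  simp only [trace, diag_apply]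
  rw [Ne, sum_eq_zero_iff_of_nonneg fun i _ => pow_apply_nonneg hB k i i]
  simp only [mem_univ, true_imp_iff, not_forall, pow_apply_ne_zero_iff_exists_walk hB]
  constructor
  · rintro ⟨i, p, hp0, hpk, hp⟩
    exact ⟨p, hpk.trans hp0.symm, hp⟩
  · rintro ⟨p, hpk, hp⟩
    exact ⟨p 0, p, rfl, hpk, hp⟩

theorem trace_one_add_pow_eq_card_iff (hB : ∀ i j, 0 ≤ B i j) (k : ℕ) :
    trace ((1 + B) ^ k) = (Fintype.card n : R) ↔ ∀ m, 1 ≤ m → m ≤ k → trace (B ^ m) = 0 := by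
  have hbinom : trace ((1 + B) ^ k) = ∑ m ∈ range (k + 1), k.choose m • trace (B ^ m) := by
    rw [add_comm, (Commute.one_right B).add_pow', trace_sum,
      Nat.sum_antidiagonal_eq_sum_range_succ_mk]
    simp only [one_pow, mul_one, trace_smul]
  rw [hbinom, sum_range_succ', pow_zero, trace_one, Nat.choose_zero_right, one_smul,
    add_eq_right, sum_eq_zero_iff_of_nonneg fun m _ => nsmul_nonneg (trace_pow_nonneg hB _) _]
  have hchoose (m : ℕ) (hm : m ≤ k) : k.choose m • trace (B ^ m) = 0 ↔ trace (B ^ m) = 0 := by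
    simp [(Nat.choose_pos hm).ne']
  constructor
  · intro h m hm1 hmk
    obtain ⟨m, rfl⟩ := Nat.exists_eq_add_of_le' hm1
    exact (hchoose _ hmk).mp (h m (mem_range.mpr hmk))
  · intro h m hm
    exact (hchoose _ (mem_range.mp hm)).mpr (h _ le_add_self (mem_range.mp hm))

end Matrix

open Matrix

theorem hasCycleOfLength_iff_trace_pow_ne_zero {N : ℕ} (A : Matrix (Fin N) (Fin N) ℝ) (k : ℕ) :
    hasCycleOfLength A k ↔ trace ((A ⊙ A) ^ k) ≠ 0 := by
  rw [trace_pow_ne_zero_iff_exists_closed_walk (hadamard_self_nonneg A)]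
  simp only [hadamard_apply, ne_eq, mul_self_eq_zero]
  rfl

theorem hasCycleOfLength.exists_le_card {N : ℕ} {A : Matrix (Fin N) (Fin N) ℝ} {k : ℕ}
    (h : hasCycleOfLength A k) (hk : 1 ≤ k) : ∃ b, 1 ≤ b ∧ b ≤ N ∧ hasCycleOfLength A b := by
  obtain hkN | hNk := le_total k N
  · exact ⟨k, hk, hkN, h⟩
  · obtain ⟨p, -, hp⟩ := h
    have h := exists_closed_subwalk_of_card_le (r := fun i j => A i j ≠ 0) (by simpa using hNk) hp
    rwa [Fintype.card_fin] at h

theorem trace_one_add_hadamard_self_pow_eq_iff {N : ℕ} (A : Matrix (Fin N) (Fin N) ℝ) :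
    trace ((1 + A ⊙ A) ^ N) = (N : ℝ) ↔ ¬ ∃ k, 1 ≤ k ∧ hasCycleOfLength A k := by
  have h := trace_one_add_pow_eq_card_iff (hadamard_self_nonneg A) N
  rw [Fintype.card_fin] at h
  rw [h]
  constructor
  · rintro hacyclic ⟨k, hk, hcycle⟩
    obtain ⟨b, hb1, hbN, hb⟩ := hcycle.exists_le_card hk
    exact (hasCycleOfLength_iff_trace_pow_ne_zero A b).mp hb (hacyclic b hb1 hbN)
  · intro hacyclic m hm1 _
    by_contra hm
    exact hacyclic ⟨m, hm1, (hasCycleOfLength_iff_trace_pow_ne_zero A m).mpr hm⟩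

theorem stmt_13 {N : ℕ} :
    IsClosed {A : Matrix (Fin N) (Fin N) ℝ |
      Matrix.trace ((1 + A ⊙ A) ^ N) = (N : ℝ)} ∧
    {A : Matrix (Fin N) (Fin N) ℝ |
        Matrix.trace ((1 + A ⊙ A) ^ N) = (N : ℝ)}
      = {A | ¬ ∃ k, 1 ≤ k ∧ hasCycleOfLength A k} :=
  ⟨isClosed_eq (by fun_prop) continuous_const,
    Set.ext fun A => trace_one_add_hadamard_self_pow_eq_iff A⟩
end

section
/- Let M be the 0/1 adjacency matrix of a directed graph on N vertices. Then Tr[(I + M)^N] = N if and only if the graph has no directed cycles, and in that case (I + M)^N has (i,j)-entry equal to Σ_{k=0}^{N−1} C(N,k) · (number of directed walks of length k from i to j). -/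
/-!
Entry `(i, j)` of `M ^ k` counts the walks of length `k` from `i` to `j`, so by the binomial
theorem `(1 + M) ^ N = ∑ C(N, k) M ^ k`. The term `k = 0` contributes `N` to the trace and all
other terms are nonnegative counts of closed walks, so the trace is `N` exactly when there is no
closed walk of length between `1` and `N`. By pigeonhole, a walk with at least `N` steps revisits
a vertex and so contains a cycle of length at most `N`; hence this condition is acyclicity, and
it also forces `M ^ N = 0`, which removes the last binomial term.
-/

open Finset

section Cycles

variable {V : Type*} (G : V → V → Prop)

def HasCycle : Prop :=
  ∃ k, 1 ≤ k ∧ ∃ p : ℕ → V, p k = p 0 ∧ ∀ m < k, G (p m) (p (m + 1))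

variable [Fintype V] {G}

lemma exists_short_cycle_of_long_walk {k : ℕ} {q : ℕ → V}
    (hq : ∀ m < k, G (q m) (q (m + 1))) (hk : Fintype.card V ≤ k) :
    ∃ l, 1 ≤ l ∧ l ≤ Fintype.card V ∧
      ∃ p : ℕ → V, p l = p 0 ∧ ∀ m < l, G (p m) (p (m + 1)) := by
  obtain ⟨a, ha, b, hb, hne, heq⟩ := exists_ne_map_eq_of_card_lt_of_maps_to (t := univ)
    (s := range (Fintype.card V + 1)) (f := q) (by simp) (fun _ _ => mem_coe.2 (mem_univ _))
  wlog hab : a < b generalizing a b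
  · exact this b hb a ha hne.symm heq.symm (hne.symm.lt_of_le (not_lt.1 hab))
  rw [mem_range] at ha hb
  exact ⟨b - a, by omega, by omega, fun m => q (a + m),
    by simp [← heq, Nat.add_sub_cancel' hab.le],
    fun m hm => by simpa [add_assoc] using hq (a + m) (by omega)⟩

end Cycles

section Walks

variable {V : Type*} [Fintype V] [DecidableEq V] (G : V → V → Prop) [DecidableRel G]

def walkFinset (k : ℕ) (i j : V) : Finset (Fin (k + 1) → V) :=
  univ.filter fun p => p 0 = i ∧ p (Fin.last k) = j ∧ ∀ m : Fin k, G (p m.castSucc) (p m.succ)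

variable {G}

@[simp]
lemma mem_walkFinset {k : ℕ} {i j : V} {p : Fin (k + 1) → V} :
    p ∈ walkFinset G k i j ↔
      p 0 = i ∧ p (Fin.last k) = j ∧ ∀ m : Fin k, G (p m.castSucc) (p m.succ) := by
  simp [walkFinset]

variable (G)

lemma card_walkFinset_zero (i j : V) : #(walkFinset G 0 i j) = if i = j then 1 else 0 := by
  split_ifs with h
  · subst h
    refine card_eq_one.2
      ⟨fun _ => i, eq_singleton_iff_unique_mem.2 ⟨by simp, fun p hp => ?_⟩⟩
    funext m
    rw [Fin.fin_one_eq_zero m, (mem_walkFinset.1 hp).1]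
  · refine card_eq_zero.2 (eq_empty_of_forall_notMem fun p hp => h ?_)
    obtain ⟨h0, hl, -⟩ := mem_walkFinset.1 hp
    exact h0 ▸ hl

lemma card_walkFinset_succ (k : ℕ) (i j : V) :
    #(walkFinset G (k + 1) i j) = ∑ l, if G l j then #(walkFinset G k i l) else 0 := by
  -- Dropping the endpoint `j` leaves a walk of length `k` ending at a predecessor of `j`.
  let lastStep := univ.filter fun q : Fin (k + 1) → V =>
    q 0 = i ∧ (∀ m : Fin k, G (q m.castSucc) (q m.succ)) ∧ G (q (Fin.last k)) j
  have hsplit : #(walkFinset G (k + 1) i j) = #lastStep := by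
    refine card_bij' (fun p _ => Fin.init p) (fun q _ => Fin.snoc q j) (fun p hp => ?_)
      (fun q hq => ?_) (fun p hp => ?_) (fun q _ => Fin.init_snoc _ _)
    · obtain ⟨h0, hl, he⟩ := mem_walkFinset.1 hp
      simp only [mem_filter, mem_univ, true_and, lastStep]
      refine ⟨h0, fun m => ?_, ?_⟩
      · simpa [Fin.init] using he m.castSucc
      · simpa [Fin.init, hl] using he (Fin.last k)
    · simp only [mem_filter, mem_univ, true_and, lastStep] at hq
      obtain ⟨h0, he, hl⟩ := hq
      refine mem_walkFinset.2 ⟨by simpa using h0, by simp, Fin.lastCases ?_ fun m => ?_⟩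
      · simpa using hl
      · rw [Fin.succ_castSucc, Fin.snoc_castSucc, Fin.snoc_castSucc]; exact he m
    · rw [← (mem_walkFinset.1 hp).2.1, Fin.snoc_init_self]
  rw [hsplit, card_eq_sum_card_fiberwise (f := fun q => q (Fin.last k)) (t := univ)
    (fun _ _ => mem_univ _)]
  refine sum_congr rfl fun l _ => ?_
  rw [filter_filter]
  split_ifs with hl
  · congr 1
    ext q
    simp only [mem_filter, mem_univ, true_and, walkFinset]
    constructor
    · rintro ⟨⟨h0, he, -⟩, rfl⟩
      exact ⟨h0, rfl, he⟩
    · rintro ⟨h0, rfl, he⟩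
      exact ⟨⟨h0, he, hl⟩, rfl⟩
  · refine card_eq_zero.2 (filter_eq_empty_iff.2 ?_)
    rintro q - ⟨⟨-, -, hq⟩, rfl⟩
    exact hl hq

lemma sum_card_walkFinset_zero_self : ∑ i, #(walkFinset G 0 i i) = Fintype.card V := by
  simp [card_walkFinset_zero]

variable {G}

lemma walkFinset_nonempty_iff {k : ℕ} {i j : V} : (walkFinset G k i j).Nonempty ↔
    ∃ q : ℕ → V, q 0 = i ∧ q k = j ∧ ∀ m < k, G (q m) (q (m + 1)) := by
  constructor
  · rintro ⟨p, hp⟩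
    obtain ⟨h0, hl, he⟩ := mem_walkFinset.1 hp
    refine ⟨fun m => p ⟨min m k, by omega⟩, by simp only [Nat.zero_min]; exact h0,
      by simp only [min_self]; exact hl, fun m hm => ?_⟩
    have hm' : min (m + 1) k = m + 1 := by omega
    simpa [hm', Nat.min_eq_left hm.le] using he ⟨m, hm⟩
  · rintro ⟨q, h0, hk, he⟩
    exact ⟨fun m => q m, mem_walkFinset.2 ⟨h0, hk, fun m => he m m.isLt⟩⟩

lemma hasCycle_iff_exists_closed_walk :
    HasCycle G ↔ ∃ k < Fintype.card V, ∃ i, (walkFinset G (k + 1) i i).Nonempty := by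
  constructor
  · rintro ⟨k, hk, p, hp, he⟩
    obtain ⟨l, hl, hlV, q, hq, hqe⟩ : ∃ l, 1 ≤ l ∧ l ≤ Fintype.card V ∧
        ∃ q : ℕ → V, q l = q 0 ∧ ∀ m < l, G (q m) (q (m + 1)) := by
      rcases le_total k (Fintype.card V) with hkV | hVk
      · exact ⟨k, hk, hkV, p, hp, he⟩
      · exact exists_short_cycle_of_long_walk he hVk
    refine ⟨l - 1, by omega, q 0, walkFinset_nonempty_iff.2 ⟨q, rfl, ?_, ?_⟩⟩
    all_goals rwa [Nat.sub_add_cancel hl]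
  · rintro ⟨k, -, i, hne⟩
    obtain ⟨q, h0, hk, he⟩ := walkFinset_nonempty_iff.1 hne
    exact ⟨k + 1, by omega, q, hk.trans h0.symm, he⟩

lemma walkFinset_eq_empty_of_card_le (hG : ¬ HasCycle G) {k : ℕ} (hk : Fintype.card V ≤ k)
    (i j : V) : walkFinset G k i j = ∅ := by
  refine not_nonempty_iff_eq_empty.1 fun hne => hG ?_
  obtain ⟨q, -, -, he⟩ := walkFinset_nonempty_iff.1 hne
  obtain ⟨l, hl, -, p, hp, hpe⟩ := exists_short_cycle_of_long_walk he hk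
  exact ⟨l, hl, p, hp, hpe⟩

variable {R : Type*} [Semiring R] {M : Matrix V V R}

lemma adjacency_pow_apply (hM : ∀ i j, M i j = if G i j then 1 else 0) (k : ℕ) (i j : V) :
    (M ^ k) i j = #(walkFinset G k i j) := by
  induction k generalizing j with
  | zero => simp [card_walkFinset_zero, Matrix.one_apply]
  | succ k ih =>
    rw [pow_succ, Matrix.mul_apply, card_walkFinset_succ, Nat.cast_sum]
    refine sum_congr rfl fun l _ => ?_
    rw [ih, hM]
    split_ifs <;> simp

lemma one_add_adjacency_pow_apply (hM : ∀ i j, M i j = if G i j then 1 else 0) (n : ℕ)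
    (i j : V) :
    ((1 + M) ^ n) i j = ∑ k ∈ range (n + 1), (n.choose k : R) * #(walkFinset G k i j) := by
  rw [add_comm, (Commute.one_right M).add_pow, Matrix.sum_apply]
  refine sum_congr rfl fun k _ => ?_
  rw [one_pow, mul_one, ← nsmul_eq_mul', Matrix.smul_apply, adjacency_pow_apply hM, nsmul_eq_mul]

lemma trace_one_add_adjacency_pow (hM : ∀ i j, M i j = if G i j then 1 else 0) (n : ℕ) :
    ((1 + M) ^ n).trace =
      ((∑ k ∈ range (n + 1), n.choose k * ∑ i, #(walkFinset G k i i) : ℕ) : R) := by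
  simp only [Matrix.trace, Matrix.diag, one_add_adjacency_pow_apply hM, mul_sum]
  push_cast
  exact sum_comm

lemma trace_one_add_adjacency_pow_card_eq_iff [CharZero R]
    (hM : ∀ i j, M i j = if G i j then 1 else 0) :
    ((1 + M) ^ Fintype.card V).trace = Fintype.card V ↔ ¬ HasCycle G := by
  rw [trace_one_add_adjacency_pow hM, Nat.cast_inj, sum_range_succ', Nat.choose_zero_right,
    one_mul, sum_card_walkFinset_zero_self, add_eq_right,
    hasCycle_iff_exists_closed_walk, sum_eq_zero_iff]
  simp only [mem_range, mul_eq_zero, Nat.choose_eq_zero_iff, sum_eq_zero_iff, mem_univ,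
    forall_const, card_eq_zero, not_exists, not_and, not_nonempty_iff_eq_empty]
  exact forall₂_congr fun k hk => or_iff_right (by omega)

end Walks

open Classical in
/-- For the 0/1 adjacency matrix `M` of a digraph `G` on `N` vertices,
`Tr[(I + M)^N] = N` iff `G` is acyclic, in which case each `(i,j)` entry of `(I + M)^N`
is `∑_{k=0}^{N-1} C(N,k) ·` (number of directed walks of length `k` from `i` to `j`). -/
theorem stmt_14 {N : ℕ} (G : Fin N → Fin N → Prop)
    (M : Matrix (Fin N) (Fin N) ℝ)
    (hM : ∀ i j, M i j = if G i j then 1 else 0) :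
    (Matrix.trace ((1 + M) ^ N) = (N : ℝ) ↔
      ¬ ∃ k, 1 ≤ k ∧ ∃ p : ℕ → Fin N, p k = p 0 ∧ ∀ m < k, G (p m) (p (m + 1))) ∧
    ((¬ ∃ k, 1 ≤ k ∧ ∃ p : ℕ → Fin N, p k = p 0 ∧ ∀ m < k, G (p m) (p (m + 1))) →
      ∀ i j, ((1 + M) ^ N) i j = ∑ k ∈ Finset.range N, (N.choose k : ℝ) *
        ((Finset.univ.filter (fun p : Fin (k + 1) → Fin N =>
          p 0 = i ∧ p (Fin.last k) = j ∧
            ∀ m : Fin k, G (p m.castSucc) (p m.succ))).card : ℝ)) := by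
  have htrace := trace_one_add_adjacency_pow_card_eq_iff hM
  rw [Fintype.card_fin] at htrace
  refine ⟨htrace, fun hG i j => ?_⟩
  rw [one_add_adjacency_pow_apply hM, sum_range_succ,
    walkFinset_eq_empty_of_card_le hG (Fintype.card_fin N).le, card_empty, Nat.cast_zero,
    mul_zero, add_zero]
  rfl
end
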